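/- arXiv:2312.01990 — 3 statements merged into one kernel-verified Lean document; each statement's English description precedes it below -/
import Mathlib

section
/- Let d, m ≥ 1 and let G be a random m × d matrix whose entries are i.i.d. standard normal N(0,1) random variables, with rows g_1, …, g_m. For z ∈ ℝ^d define the positive random feature map φ⁺(z) = (1/√m) · exp(−‖z‖²/2) · (exp(⟨g_1, z⟩), …, exp(⟨g_m, z⟩)) ∈ ℝ^m. Then for all x, y ∈ ℝ^d, the variance over G of the estimator K̂(x,y) = ⟨φ⁺(x), φ⁺(y)⟩ equals (1/m) · exp(−(‖x‖² + ‖y‖²)) · (exp(2‖z‖²) − exp(‖z‖²)), where z = x + y. -/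
/-!
Writing `z = x + y`, the estimator is `c · ∑ₗ exp ⟨gₗ, z⟩` with
`c = exp (-(‖x‖² + ‖y‖²) / 2) / m`. The rows `gₗ` are i.i.d., so its variance is
`c² · m · Var[exp ⟨g, z⟩]`, and the Gaussian moment generating function gives
`𝔼 exp ⟨g, z⟩ = exp (‖z‖² / 2)` and `𝔼 (exp ⟨g, z⟩)² = 𝔼 exp ⟨g, 2z⟩ = exp (2‖z‖²)`.
-/

open MeasureTheory ProbabilityTheory Real

/-- The law of a random `m × d` matrix (viewed as `Fin m → Fin d → ℝ`, with rows
`G 0, …, G (m-1)`) whose `m·d` entries are i.i.d. standard normal `N(0,1)`. -/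
noncomputable def gaussianMatrix (m d : ℕ) : Measure (Fin m → Fin d → ℝ) :=
  Measure.pi fun _ => Measure.pi fun _ => gaussianReal 0 1

lemma variance_sum_comp_eval_pi {ι E : Type*} [Fintype ι] [MeasurableSpace E] {μ : Measure E}
    [IsProbabilityMeasure μ] {X : E → ℝ} (hX : MemLp X 2 μ) :
    Var[fun ω : ι → E => ∑ i, X (ω i); Measure.pi fun _ => μ] = Fintype.card ι * Var[X; μ] := by
  have h := variance_sum_pi (μ := fun _ : ι => μ) (X := fun _ => X) fun _ => hX
  simp only [Finset.sum_const, Finset.card_univ, nsmul_eq_mul] at h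
  rw [← h]
  congr with ω
  simp

section GaussianVector

variable {ι : Type*} [Fintype ι]

lemma sq_exp_sum_mul (w z : ι → ℝ) :
    exp (∑ i, w i * z i) ^ 2 = exp (∑ i, w i * (2 * z i)) := by
  rw [← exp_nat_mul, Finset.mul_sum]
  simp_rw [Nat.cast_ofNat, mul_left_comm (2 : ℝ)]

lemma integrable_exp_sum_mul_pi_gaussianReal (μ : ι → ℝ) (v : ι → NNReal) (z : ι → ℝ) :
    Integrable (fun w : ι → ℝ => exp (∑ i, w i * z i))
      (Measure.pi fun i => gaussianReal (μ i) (v i)) := by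
  simp_rw [exp_sum, mul_comm _ (z _)]
  exact Integrable.fintype_prod fun i => integrable_exp_mul_gaussianReal (z i)

lemma integral_exp_sum_mul_pi_gaussianReal (μ : ι → ℝ) (v : ι → NNReal) (z : ι → ℝ) :
    ∫ w, exp (∑ i, w i * z i) ∂(Measure.pi fun i => gaussianReal (μ i) (v i))
      = exp (∑ i, (μ i * z i + v i * z i ^ 2 / 2)) := by
  calc ∫ w, exp (∑ i, w i * z i) ∂(Measure.pi fun i => gaussianReal (μ i) (v i))
      = ∫ w, ∏ i, exp (z i * w i) ∂(Measure.pi fun i => gaussianReal (μ i) (v i)) := by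
        simp_rw [exp_sum, mul_comm]
    _ = ∏ i, ∫ u, exp (z i * u) ∂gaussianReal (μ i) (v i) :=
        integral_fintype_prod_eq_prod fun i u => exp (z i * u)
    _ = ∏ i, exp (μ i * z i + v i * z i ^ 2 / 2) := by
        congr with i
        exact mgf_gaussianReal (by simp) (z i)
    _ = exp (∑ i, (μ i * z i + v i * z i ^ 2 / 2)) := (exp_sum _ _).symm

lemma memLp_exp_sum_mul_pi_gaussianReal (μ : ι → ℝ) (v : ι → NNReal) (z : ι → ℝ) :
    MemLp (fun w : ι → ℝ => exp (∑ i, w i * z i)) 2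
      (Measure.pi fun i => gaussianReal (μ i) (v i)) := by
  refine (memLp_two_iff_integrable_sq
    (integrable_exp_sum_mul_pi_gaussianReal μ v z).aestronglyMeasurable).2 ?_
  simp_rw [sq_exp_sum_mul]
  exact integrable_exp_sum_mul_pi_gaussianReal μ v (fun i => 2 * z i)

lemma variance_exp_sum_mul_pi_gaussianReal (z : ι → ℝ) :
    Var[fun w : ι → ℝ => exp (∑ i, w i * z i); Measure.pi fun _ => gaussianReal 0 1]
      = exp (2 * ∑ i, z i ^ 2) - exp (∑ i, z i ^ 2) := by
  rw [variance_eq_sub (memLp_exp_sum_mul_pi_gaussianReal _ _ z)]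
  simp_rw [Pi.pow_apply, sq_exp_sum_mul]
  rw [integral_exp_sum_mul_pi_gaussianReal (fun _ => 0) (fun _ => 1) (fun i => 2 * z i),
    integral_exp_sum_mul_pi_gaussianReal (fun _ => 0) (fun _ => 1) z, ← exp_nat_mul]
  simp only [zero_mul, zero_add, NNReal.coe_one, one_mul, Nat.cast_ofNat, mul_pow,
    ← Finset.sum_div, ← Finset.mul_sum]
  ring_nf

end GaussianVector

theorem positive_random_features_variance_general (d m : ℕ)
    (x y : Fin d → ℝ) :
    ProbabilityTheory.variance
      (fun G => ∑ l : Fin m,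
        ((1 / Real.sqrt m) * Real.exp (-(∑ i, x i ^ 2) / 2)
            * Real.exp (∑ i, G l i * x i))
        * ((1 / Real.sqrt m) * Real.exp (-(∑ i, y i ^ 2) / 2)
            * Real.exp (∑ i, G l i * y i)))
      (gaussianMatrix m d)
      = (1 / m) * Real.exp (-((∑ i, x i ^ 2) + (∑ i, y i ^ 2)))
        * (Real.exp (2 * ∑ i, (x i + y i) ^ 2)
            - Real.exp (∑ i, (x i + y i) ^ 2)) := by
  set c := 1 / √(m : ℝ) * (1 / √m) * exp (-(∑ i, x i ^ 2) / 2) * exp (-(∑ i, y i ^ 2) / 2)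
  have estimator : ∀ G : Fin m → Fin d → ℝ, ∑ l : Fin m,
        ((1 / Real.sqrt m) * Real.exp (-(∑ i, x i ^ 2) / 2) * Real.exp (∑ i, G l i * x i))
        * ((1 / Real.sqrt m) * Real.exp (-(∑ i, y i ^ 2) / 2) * Real.exp (∑ i, G l i * y i))
      = c * ∑ l, exp (∑ i, G l i * (x i + y i)) := by
    intro G
    simp only [c, Finset.mul_sum, mul_add, Finset.sum_add_distrib, exp_add]
    exact Finset.sum_congr rfl fun l _ => by ring
  have scale : c ^ 2 * m = 1 / m * exp (-((∑ i, x i ^ 2) + (∑ i, y i ^ 2))) := by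
    have hm : 1 / √(m : ℝ) * (1 / √m) = 1 / m := by
      rw [one_div_mul_one_div, mul_self_sqrt (Nat.cast_nonneg m)]
    rcases eq_or_ne (m : ℝ) 0 with hm0 | hm0
    · simp [c, hm0]
    · simp only [c, hm, mul_pow, ← exp_nat_mul, mul_assoc, ← exp_add]
      field_simp
      ring_nf
  simp_rw [estimator]
  rw [variance_const_mul, gaussianMatrix, variance_sum_comp_eval_pi
    (memLp_exp_sum_mul_pi_gaussianReal _ _ _), variance_exp_sum_mul_pi_gaussianReal,
    Fintype.card_fin, ← mul_assoc, scale]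

/-- Variance of the positive random feature estimator of the softmax kernel
(Lemma 2 of the Performers paper): with
`φ⁺(z) = (1/√m)·exp(-‖z‖²/2)·(exp(⟨g_1,z⟩), …, exp(⟨g_m,z⟩))`, for all
`x, y ∈ ℝ^d`, the variance over `G` of `K̂(x,y) = ⟨φ⁺(x), φ⁺(y)⟩` equals
`(1/m)·exp(-(‖x‖² + ‖y‖²))·(exp(2‖x+y‖²) - exp(‖x+y‖²))`. -/
theorem positive_random_features_variance (d m : ℕ) (hd : 1 ≤ d) (hm : 1 ≤ m)
    (x y : Fin d → ℝ) :
    ProbabilityTheory.variance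
      (fun G => ∑ l : Fin m,
        ((1 / Real.sqrt m) * Real.exp (-(∑ i, x i ^ 2) / 2)
            * Real.exp (∑ i, G l i * x i))
        * ((1 / Real.sqrt m) * Real.exp (-(∑ i, y i ^ 2) / 2)
            * Real.exp (∑ i, G l i * y i)))
      (gaussianMatrix m d)
      = (1 / m) * Real.exp (-((∑ i, x i ^ 2) + (∑ i, y i ^ 2)))
        * (Real.exp (2 * ∑ i, (x i + y i) ^ 2)
            - Real.exp (∑ i, (x i + y i) ^ 2)) :=
  positive_random_features_variance_general d m x y
end

section
/- (Lemma 2) Let d, m ≥ 1, let r > 0, and let x, y ∈ ℝ^d with ‖x‖ = ‖y‖ = r, and let θ be the angle between x and y, i.e. cos(θ) = ⟨x,y⟩/r². Let G be a random m × d matrix whose entries are i.i.d. standard normal N(0,1) random variables, with rows g_1, …, g_m, and for z ∈ ℝ^d define φ_exp^rand(z) = (exp(⟨g_1, z⟩), …, exp(⟨g_m, z⟩)) ∈ ℝ^m. Define g^m_{r,t} = (t/√m) · exp(r²(2cos(θ) + 1)) · √(1 − exp(−2r²(1 + cos(θ)))). Then for every t > 0, the probability (over G) that |⟨φ_exp^rand(x),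 φ_exp^rand(y)⟩/(m · exp(r²)) − exp(⟨x, y⟩)| > g^m_{r,t} is at most 1/t². -/
/-!
With `z = x + y`, each summand `exp ⟨g_l, x⟩ · exp ⟨g_l, y⟩ = exp ⟨g_l, z⟩` is log-normal, with mean
`exp (‖z‖² / 2)` and second moment `exp (2‖z‖²)`, and the rows `g_l` are independent. Hence the sum
has mean `m · exp (‖z‖² / 2)` and variance `m · (exp (2‖z‖²) - exp ‖z‖²)`. Since
`‖z‖² = 2r²(1 + cos θ)`, multiplying the deviation by `m · exp r²` turns the threshold `g^m_{r,t}`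
into exactly `t` standard deviations of the sum, and Chebyshev's inequality gives `1 / t²`.
-/

open MeasureTheory ProbabilityTheory Real

-- The strict inequality makes this hold also when `Var[X] = 0`, where `X` is a.e. constant.
lemma meas_mul_sqrt_variance_lt_le_one_div_sq {Ω : Type*} [MeasurableSpace Ω]
    {μ : Measure Ω} [IsFiniteMeasure μ] {X : Ω → ℝ} (hX : MemLp X 2 μ) {t : ℝ} (ht : 0 < t) :
    μ {ω | t * √(variance X μ) < |X ω - μ[X]|} ≤ ENNReal.ofReal (1 / t ^ 2) := by
  rcases (variance_nonneg X μ).eq_or_lt with hvar | hvar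
  · have hnull : μ {ω | X ω ≠ μ[X]} = 0 :=
      ae_iff.1 (ae_eq_integral_of_variance_eq_zero hX hvar.symm)
    have hsub : {ω | t * √(variance X μ) < |X ω - μ[X]|} ⊆ {ω | X ω ≠ μ[X]} := by
      intro ω hω hXω
      simp [hXω, ← hvar] at hω
    simp [measure_mono_null hsub hnull]
  · calc μ {ω | t * √(variance X μ) < |X ω - μ[X]|}
        ≤ μ {ω | t * √(variance X μ) ≤ |X ω - μ[X]|} :=
          measure_mono (Set.ofPred_subset_ofPred.2 fun _ => le_of_lt)
      _ ≤ ENNReal.ofReal (variance X μ / (t * √(variance X μ)) ^ 2) :=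
        meas_ge_le_variance_div_sq hX (by positivity)
      _ = ENNReal.ofReal (1 / t ^ 2) := by
        rw [mul_pow, sq_sqrt hvar.le]
        field_simp

section IID

variable {ι E : Type*} [Fintype ι] [MeasurableSpace E] {μ : Measure E} [IsProbabilityMeasure μ]
  {f : E → ℝ}

lemma integral_sum_comp_eval (hf : Integrable f μ) :
    ∫ x, ∑ i, f (x i) ∂(Measure.pi fun _ : ι => μ) = Fintype.card ι * ∫ u, f u ∂μ := by
  rw [integral_finsetSum _ fun i _ => integrable_comp_eval hf]
  simp [integral_comp_eval (μ := fun _ : ι => μ) hf.aestronglyMeasurable]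

lemma memLp_sum_comp_eval (hf : MemLp f 2 μ) :
    MemLp (fun x : ι → E => ∑ i, f (x i)) 2 (Measure.pi fun _ => μ) :=
  memLp_finsetSum _ fun i _ => hf.comp_measurePreserving (measurePreserving_eval _ i)

lemma variance_sum_comp_eval (hf : MemLp f 2 μ) :
    variance (fun x : ι → E => ∑ i, f (x i)) (Measure.pi fun _ => μ)
      = Fintype.card ι * variance f μ := by
  simpa [Finset.sum_fn] using variance_sum_pi (μ := fun _ => μ) (X := fun _ => f) fun _ => hf

end IID

section GaussianVector

variable {ι : Type*} [Fintype ι]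

lemma integrable_exp_sum_mul_gaussianReal_pi (z : ι → ℝ) :
    Integrable (fun g : ι → ℝ => exp (∑ i, g i * z i)) (Measure.pi fun _ => gaussianReal 0 1) := by
  simp_rw [Real.exp_sum, mul_comm _ (z _)]
  exact Integrable.fintype_prod fun i => integrable_exp_mul_gaussianReal (z i)

lemma integral_exp_sum_mul_gaussianReal_pi (z : ι → ℝ) :
    ∫ g, exp (∑ i, g i * z i) ∂(Measure.pi fun _ => gaussianReal 0 1)
      = exp ((∑ i, z i ^ 2) / 2) := by
  simp_rw [Real.exp_sum, mul_comm _ (z _)]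
  rw [integral_fintype_prod_eq_prod (fun i (u : ℝ) => exp (z i * u)), Finset.sum_div, Real.exp_sum]
  refine Finset.prod_congr rfl fun i _ => ?_
  simpa [mgf] using congrFun (mgf_fun_id_gaussianReal (μ := 0) (v := 1)) (z i)

lemma exp_sum_mul_sq (g z : ι → ℝ) :
    exp (∑ i, g i * z i) ^ 2 = exp (∑ i, g i * (2 * z i)) := by
  rw [← Real.exp_nat_mul, Finset.mul_sum]
  congr 2 with i
  ring

lemma memLp_exp_sum_mul_gaussianReal_pi (z : ι → ℝ) :
    MemLp (fun g : ι → ℝ => exp (∑ i, g i * z i)) 2 (Measure.pi fun _ => gaussianReal 0 1) := by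
  refine (memLp_two_iff_integrable_sq (Measurable.aestronglyMeasurable (by fun_prop))).2 ?_
  simpa only [exp_sum_mul_sq] using integrable_exp_sum_mul_gaussianReal_pi (fun i => 2 * z i)

lemma variance_exp_sum_mul_gaussianReal_pi (z : ι → ℝ) :
    variance (fun g : ι → ℝ => exp (∑ i, g i * z i)) (Measure.pi fun _ => gaussianReal 0 1)
      = exp (2 * ∑ i, z i ^ 2) - exp (∑ i, z i ^ 2) := by
  rw [variance_eq_sub (memLp_exp_sum_mul_gaussianReal_pi z)]
  simp only [Pi.pow_apply, exp_sum_mul_sq, integral_exp_sum_mul_gaussianReal_pi]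
  rw [← Real.exp_nat_mul]
  congr 2
  · simp only [mul_pow, ← Finset.mul_sum]; ring
  · ring

end GaussianVector

lemma lt_abs_sub_of_lt_abs_div_sub {m r S t X : ℝ} (hm : 0 < m)
    (h : t / √m * exp (S - r ^ 2) * √(1 - exp (-S))
      < |X / (m * exp (r ^ 2)) - exp (S / 2 - r ^ 2)|) :
    t * √(m * (exp (2 * S) - exp S)) < |X - m * exp (S / 2)| := by
  have hk : 0 < m * exp (r ^ 2) := by positivity
  have hsqrt : √(m * (exp (2 * S) - exp S)) = √m * exp S * √(1 - exp (-S)) := by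
    have : m * (exp (2 * S) - exp S) = m * exp S ^ 2 * (1 - exp (-S)) := by
      rw [exp_neg, two_mul, exp_add]
      field_simp
    rw [this, sqrt_mul (by positivity), sqrt_mul hm.le, sqrt_sq (exp_pos S).le]
  have hX : X - m * exp (S / 2)
      = (X / (m * exp (r ^ 2)) - exp (S / 2 - r ^ 2)) * (m * exp (r ^ 2)) := by
    rw [exp_sub]; field_simp
  rw [hsqrt, hX, abs_mul, abs_of_pos hk]
  calc t * (√m * exp S * √(1 - exp (-S)))
      = t / √m * exp (S - r ^ 2) * √(1 - exp (-S)) * (m * exp (r ^ 2)) := by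
        rw [exp_sub]
        field_simp
        rw [sq_sqrt hm.le]
        ring
    _ < _ := mul_lt_mul_of_pos_right h hk

instance (m d : ℕ) : IsProbabilityMeasure (gaussianMatrix m d) := by
  unfold gaussianMatrix
  infer_instance

theorem lemma2_concentration_general (d m : ℕ) (hm : 1 ≤ m)
    (r : ℝ) (hr : 0 < r) (x y : Fin d → ℝ)
    (hx : Real.sqrt (∑ i, x i ^ 2) = r) (hy : Real.sqrt (∑ i, y i ^ 2) = r)
    (θ : ℝ) (hθ : Real.cos θ = (∑ i, x i * y i) / r ^ 2)
    (t : ℝ) (ht : 0 < t) :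
    gaussianMatrix m d
      {G | |(∑ l : Fin m,
              Real.exp (∑ i, G l i * x i) * Real.exp (∑ i, G l i * y i))
              / (m * Real.exp (r ^ 2))
            - Real.exp (∑ i, x i * y i)|
          > (t / Real.sqrt m) * Real.exp (r ^ 2 * (2 * Real.cos θ + 1))
              * Real.sqrt (1 - Real.exp (-(2 * r ^ 2 * (1 + Real.cos θ))))}
      ≤ ENNReal.ofReal (1 / t ^ 2) := by
  have hxy : ∑ i, x i * y i = r ^ 2 * cos θ := by
    rw [hθ]
    field_simp
  have hnorm_sq : ∀ v : Fin d → ℝ, √(∑ i, v i ^ 2) = r → ∑ i, v i ^ 2 = r ^ 2 := fun v hv => by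
    rw [← hv, sq_sqrt (by positivity)]
  have hS : ∑ i, (x i + y i) ^ 2 = 2 * r ^ 2 * (1 + cos θ) := by
    simp only [add_sq, Finset.sum_add_distrib, mul_assoc, ← Finset.mul_sum,
      hnorm_sq x hx, hnorm_sq y hy, hxy]
    ring
  set S := 2 * r ^ 2 * (1 + cos θ)
  let X : (Fin m → Fin d → ℝ) → ℝ := fun G => ∑ l, exp (∑ i, G l i * (x i + y i))
  have hX : MemLp X 2 (gaussianMatrix m d) :=
    memLp_sum_comp_eval (memLp_exp_sum_mul_gaussianReal_pi _)
  have hX_mean : ∫ G, X G ∂gaussianMatrix m d = m * exp (S / 2) := by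
    rw [gaussianMatrix, integral_sum_comp_eval (integrable_exp_sum_mul_gaussianReal_pi _),
      integral_exp_sum_mul_gaussianReal_pi, hS, Fintype.card_fin]
  have hX_var : variance X (gaussianMatrix m d) = m * (exp (2 * S) - exp S) := by
    rw [gaussianMatrix, variance_sum_comp_eval (memLp_exp_sum_mul_gaussianReal_pi _),
      variance_exp_sum_mul_gaussianReal_pi, hS, Fintype.card_fin]
  refine (measure_mono fun G hG => ?_).trans (meas_mul_sqrt_variance_lt_le_one_div_sq hX ht)
  have hsum : ∑ l, exp (∑ i, G l i * x i) * exp (∑ i, G l i * y i) = X G := by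
    simp only [X, ← exp_add, ← Finset.sum_add_distrib, mul_add]
  have hexp₁ : r ^ 2 * (2 * cos θ + 1) = S - r ^ 2 := by ring
  have hexp₂ : r ^ 2 * cos θ = S / 2 - r ^ 2 := by ring
  rw [Set.mem_ofPred_eq, hsum, hxy, hexp₁, hexp₂] at hG
  rw [Set.mem_ofPred_eq, hX_mean, hX_var]
  exact lt_abs_sub_of_lt_abs_div_sub (by exact_mod_cast hm) hG

/-- Lemma 2 of the paper: for `x, y ∈ ℝ^d` with `‖x‖ = ‖y‖ = r`, angle `θ`
between them (`cos θ = ⟨x,y⟩ / r²`), and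
`g^m_{r,t} = (t/√m)·exp(r²(2cos θ + 1))·√(1 - exp(-2r²(1 + cos θ)))`, for every
`t > 0` the probability over the Gaussian matrix `G` that
`|⟨φ_exp^rand(x), φ_exp^rand(y)⟩/(m·exp(r²)) - exp(⟨x,y⟩)| > g^m_{r,t}` is at
most `1/t²`, where `φ_exp^rand(z) = (exp(⟨g_1,z⟩), …, exp(⟨g_m,z⟩))`. -/
theorem lemma2_concentration (d m : ℕ) (hd : 1 ≤ d) (hm : 1 ≤ m)
    (r : ℝ) (hr : 0 < r) (x y : Fin d → ℝ)
    (hx : Real.sqrt (∑ i, x i ^ 2) = r) (hy : Real.sqrt (∑ i, y i ^ 2) = r)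
    (θ : ℝ) (hθ : Real.cos θ = (∑ i, x i * y i) / r ^ 2)
    (t : ℝ) (ht : 0 < t) :
    gaussianMatrix m d
      {G | |(∑ l : Fin m,
              Real.exp (∑ i, G l i * x i) * Real.exp (∑ i, G l i * y i))
              / (m * Real.exp (r ^ 2))
            - Real.exp (∑ i, x i * y i)|
          > (t / Real.sqrt m) * Real.exp (r ^ 2 * (2 * Real.cos θ + 1))
              * Real.sqrt (1 - Real.exp (-(2 * r ^ 2 * (1 + Real.cos θ))))}
      ≤ ENNReal.ofReal (1 / t ^ 2) :=
  lemma2_concentration_general d m hm r hr x y hx hy θ hθ t ht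
end

section
/- Let d, m ≥ 1, let A < 0 be a real number, let r > 0, and let q, k ∈ ℝ^d with ‖q‖ = ‖k‖ = r. Let G be a random m × d matrix whose entries are i.i.d. standard normal N(0,1) random variables, with rows g_1, …, g_m, and define v ∈ ℝ^m by v_i = (1 − 4A)^(d/4) · exp(A‖g_i‖²). Define the feature maps φ₁(z) = v ⊙ exp(√(1 − 4A)·Gz) and φ₂(z) = v ⊙ exp(√(1 − 4A)·Gz), where exp is applied entrywise and ⊙ is the entrywise (Hadamard) product. Then the expectation over G of ⟨φ₁(q), φ₂(k)⟩ / (m · exp(r²)) equals exp(⟨q, k⟩). -/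
/-!
Each summand depends on a single row `g` of `G` and equals
`(1 - 4A)^(d/2) · exp (2A‖g‖² + ⟨g, √(1 - 4A)(q + k)⟩)`, a product over the coordinates of `g`.
Completing the square gives `E[exp (a X² + c X)] = (1 - 2a)^(-1/2) · exp (c² / (2(1 - 2a)))` for
`X ~ N(0,1)` and `a < 1/2`; with `a = 2A` and `c = √(1 - 4A)(qᵢ + kᵢ)` the factors `(1 - 4A)^(±d/2)`
cancel, so every row has expectation `exp (‖q + k‖² / 2) = exp (r² + ⟨q, k⟩)`.
-/

open MeasureTheory ProbabilityTheory Real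

lemma exp_neg_mul_sq_add_mul_eq {b : ℝ} (hb : 0 < b) (c x : ℝ) :
    exp (-b * x ^ 2 + c * x) = exp (c ^ 2 / (4 * b)) * exp (-b * (x - c / (2 * b)) ^ 2) := by
  rw [← exp_add]
  congr 1
  field_simp
  ring

lemma integrable_exp_neg_mul_sq_add_mul {b : ℝ} (hb : 0 < b) (c : ℝ) :
    Integrable fun x : ℝ => exp (-b * x ^ 2 + c * x) := by
  simp_rw [exp_neg_mul_sq_add_mul_eq hb]
  exact ((integrable_exp_neg_mul_sq hb).comp_sub_right _).const_mul _

lemma integral_exp_neg_mul_sq_add_mul {b : ℝ} (hb : 0 < b) (c : ℝ) :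
    ∫ x, exp (-b * x ^ 2 + c * x) = exp (c ^ 2 / (4 * b)) * √(π / b) := by
  simp_rw [exp_neg_mul_sq_add_mul_eq hb, integral_const_mul,
    integral_sub_right_eq_self (fun x => exp (-b * x ^ 2)), integral_gaussian]

lemma gaussianPDFReal_mul_exp (a c x : ℝ) :
    gaussianPDFReal 0 1 x * exp (a * x ^ 2 + c * x)
      = (√(2 * π))⁻¹ * exp (-(1 / 2 - a) * x ^ 2 + c * x) := by
  simp only [gaussianPDFReal, NNReal.coe_one, mul_one, sub_zero, mul_assoc, ← exp_add]
  congr 2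
  ring

section StdGaussian

variable {a : ℝ}

lemma integrable_exp_mul_sq_add_mul_gaussianReal (ha : a < 1 / 2) (c : ℝ) :
    Integrable (fun x => exp (a * x ^ 2 + c * x)) (gaussianReal 0 1) := by
  rw [gaussianReal_of_var_ne_zero _ one_ne_zero,
    integrable_withDensity_iff_integrable_smul' (measurable_gaussianPDF 0 1)
      (ae_of_all _ fun _ => ENNReal.ofReal_lt_top)]
  simp_rw [gaussianPDF, ENNReal.toReal_ofReal (gaussianPDFReal_nonneg 0 1 _), smul_eq_mul,
    gaussianPDFReal_mul_exp]
  exact (integrable_exp_neg_mul_sq_add_mul (by linarith) c).const_mul _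

lemma integral_exp_mul_sq_add_mul_gaussianReal (ha : a < 1 / 2) (c : ℝ) :
    ∫ x, exp (a * x ^ 2 + c * x) ∂gaussianReal 0 1
      = (√(1 - 2 * a))⁻¹ * exp (c ^ 2 / (2 * (1 - 2 * a))) := by
  have hb : 0 < 1 / 2 - a := by linarith
  rw [integral_gaussianReal_eq_integral_smul one_ne_zero]
  simp_rw [smul_eq_mul, gaussianPDFReal_mul_exp, integral_const_mul,
    integral_exp_neg_mul_sq_add_mul hb]
  have h_const : (√(2 * π))⁻¹ * √(π / (1 / 2 - a)) = (√(1 - 2 * a))⁻¹ := by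
    rw [← sqrt_inv, ← sqrt_inv, ← sqrt_mul (by positivity)]
    congr 1
    field_simp
  have h_exponent : c ^ 2 / (4 * (1 / 2 - a)) = c ^ 2 / (2 * (1 - 2 * a)) := by
    congr 1
    ring
  rw [mul_left_comm, h_const, h_exponent, mul_comm]

variable {ι : Type*} [Fintype ι]

lemma exp_mul_sum_sq_add_sum_mul (a : ℝ) (c g : ι → ℝ) :
    exp (a * ∑ i, g i ^ 2 + ∑ i, g i * c i) = ∏ i, exp (a * g i ^ 2 + c i * g i) := by
  rw [← exp_sum, Finset.mul_sum, ← Finset.sum_add_distrib]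
  simp only [mul_comm (g _)]

lemma integrable_exp_mul_sum_sq_add_sum_mul_pi_gaussianReal (ha : a < 1 / 2) (c : ι → ℝ) :
    Integrable (fun g => exp (a * ∑ i, g i ^ 2 + ∑ i, g i * c i))
      (Measure.pi fun _ : ι => gaussianReal 0 1) := by
  simp_rw [exp_mul_sum_sq_add_sum_mul]
  exact Integrable.fintype_prod fun i => integrable_exp_mul_sq_add_mul_gaussianReal ha (c i)

lemma integral_exp_mul_sum_sq_add_sum_mul_pi_gaussianReal (ha : a < 1 / 2) (c : ι → ℝ) :
    ∫ g, exp (a * ∑ i, g i ^ 2 + ∑ i, g i * c i) ∂(Measure.pi fun _ : ι => gaussianReal 0 1)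
      = (√(1 - 2 * a))⁻¹ ^ Fintype.card ι * exp (∑ i, c i ^ 2 / (2 * (1 - 2 * a))) := by
  simp_rw [exp_mul_sum_sq_add_sum_mul]
  rw [integral_fintype_prod_eq_prod (fun i x => exp (a * x ^ 2 + c i * x))]
  simp_rw [integral_exp_mul_sq_add_mul_gaussianReal ha]
  rw [Finset.prod_mul_distrib, Finset.prod_const, ← exp_sum, Finset.card_univ]

end StdGaussian

lemma integral_sum_comp_eval_pi {ι X : Type*} [Fintype ι] [MeasurableSpace X]
    (ν : Measure X) [IsProbabilityMeasure ν] {f : X → ℝ} (hf : Integrable f ν) :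
    ∫ G, ∑ l, f (G l) ∂(Measure.pi fun _ : ι => ν) = Fintype.card ι * ∫ x, f x ∂ν := by
  rw [integral_finsetSum _ fun l _ => integrable_comp_eval hf]
  simp_rw [integral_comp_eval (μ := fun _ => ν) hf.aestronglyMeasurable, Finset.sum_const,
    Finset.card_univ, nsmul_eq_mul]

lemma rpow_div_four_sq_eq_sqrt_pow {B : ℝ} (hB : 0 ≤ B) (d : ℕ) :
    (B ^ ((d : ℝ) / 4)) ^ 2 = √B ^ d := by
  rw [sqrt_eq_rpow, ← rpow_natCast, ← rpow_mul hB, ← rpow_natCast, ← rpow_mul hB]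
  ring_nf

section SARA

variable {ι : Type*} [Fintype ι]

lemma feature_mul_feature_eq (C a s : ℝ) (g q k : ι → ℝ) :
    C * exp (a * ∑ i, g i ^ 2) * exp (s * ∑ i, g i * q i)
        * (C * exp (a * ∑ i, g i ^ 2) * exp (s * ∑ i, g i * k i))
      = C ^ 2 * exp (2 * a * ∑ i, g i ^ 2 + ∑ i, g i * (s * (q i + k i))) := by
  have h_inner : ∑ i, g i * (s * (q i + k i)) = s * ∑ i, g i * q i + s * ∑ i, g i * k i := by
    simp only [Finset.mul_sum, ← Finset.sum_add_distrib]
    exact Finset.sum_congr rfl fun i _ => by ring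
  rw [h_inner]
  simp only [exp_add, two_mul, add_mul]
  ring

lemma integral_feature_product_pi_gaussianReal {A : ℝ} (hA : A < 1 / 4) (q k : ι → ℝ) :
    ∫ g, ((1 - 4 * A) ^ ((Fintype.card ι : ℝ) / 4)) ^ 2
        * exp (2 * A * ∑ i, g i ^ 2 + ∑ i, g i * (√(1 - 4 * A) * (q i + k i)))
        ∂(Measure.pi fun _ : ι => gaussianReal 0 1)
      = exp (∑ i, (q i + k i) ^ 2 / 2) := by
  have hB : 0 < 1 - 4 * A := by linarith
  have h_term (i : ι) :
      (√(1 - 4 * A) * (q i + k i)) ^ 2 / (2 * (1 - 4 * A)) = (q i + k i) ^ 2 / 2 := by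
    rw [mul_pow, sq_sqrt hB.le]
    field_simp
  rw [integral_const_mul, integral_exp_mul_sum_sq_add_sum_mul_pi_gaussianReal (by linarith),
    show 1 - 2 * (2 * A) = 1 - 4 * A by ring, ← mul_assoc, rpow_div_four_sq_eq_sqrt_pow hB.le,
    ← mul_pow, mul_inv_cancel₀ (by positivity), one_pow, one_mul]
  simp only [h_term]

lemma sum_add_sq_div_two_of_sqrt_sum_sq_eq {q k : ι → ℝ} {r : ℝ} (hq : √(∑ i, q i ^ 2) = r)
    (hk : √(∑ i, k i ^ 2) = r) : ∑ i, (q i + k i) ^ 2 / 2 = r ^ 2 + ∑ i, q i * k i := by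
  have h_sq_sum (z : ι → ℝ) (hz : √(∑ i, z i ^ 2) = r) : ∑ i, z i ^ 2 = r ^ 2 := by
    rw [← hz, sq_sqrt (by positivity)]
  have h_term (i : ι) : (q i + k i) ^ 2 / 2 = q i ^ 2 / 2 + k i ^ 2 / 2 + q i * k i := by ring
  simp only [h_term, Finset.sum_add_distrib, ← Finset.sum_div, h_sq_sum q hq, h_sq_sum k hk]
  ring

end SARA

theorem sara_estimator_unbiased_general (d m : ℕ) (hm : 1 ≤ m)
    (A : ℝ) (hA : A < 0) (r : ℝ) (q k : Fin d → ℝ)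
    (hq : Real.sqrt (∑ i, q i ^ 2) = r) (hk : Real.sqrt (∑ i, k i ^ 2) = r) :
    ∫ G, (∑ l : Fin m,
        (((1 - 4 * A) ^ ((d : ℝ) / 4) * Real.exp (A * ∑ i, (G l i) ^ 2))
            * Real.exp (Real.sqrt (1 - 4 * A) * ∑ i, G l i * q i))
        * (((1 - 4 * A) ^ ((d : ℝ) / 4) * Real.exp (A * ∑ i, (G l i) ^ 2))
            * Real.exp (Real.sqrt (1 - 4 * A) * ∑ i, G l i * k i)))
        / (m * Real.exp (r ^ 2)) ∂(gaussianMatrix m d)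
      = Real.exp (∑ i, q i * k i) := by
  have h_row_integrable :=
    (integrable_exp_mul_sum_sq_add_sum_mul_pi_gaussianReal (ι := Fin d) (a := 2 * A)
      (by linarith) fun i => √(1 - 4 * A) * (q i + k i)).const_mul
      (((1 - 4 * A) ^ ((d : ℝ) / 4)) ^ 2)
  have h_row_integral :=
    integral_feature_product_pi_gaussianReal (ι := Fin d) (A := A) (by linarith) q k
  rw [Fintype.card_fin, sum_add_sq_div_two_of_sqrt_sum_sq_eq hq hk, exp_add] at h_row_integral
  simp_rw [feature_mul_feature_eq]
  rw [integral_div, gaussianMatrix, integral_sum_comp_eval_pi _ h_row_integrable,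
    h_row_integral, Fintype.card_fin]
  have hm_ne : (m : ℝ) ≠ 0 := by positivity
  field_simp

/-- Unbiasedness of the SARA estimator with `f = exp`: for `A < 0`,
`q, k ∈ ℝ^d` with `‖q‖ = ‖k‖ = r`, `v_i = (1-4A)^(d/4)·exp(A‖g_i‖²)`, and
feature maps `φ₁(z) = φ₂(z) = v ⊙ exp(√(1-4A)·Gz)` (entrywise `exp`, Hadamard
product `⊙`), the expectation over the Gaussian matrix `G` of
`⟨φ₁(q), φ₂(k)⟩ / (m·exp(r²))` equals `exp(⟨q,k⟩)`. -/
theorem sara_estimator_unbiased (d m : ℕ) (hd : 1 ≤ d) (hm : 1 ≤ m)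
    (A : ℝ) (hA : A < 0) (r : ℝ) (hr : 0 < r) (q k : Fin d → ℝ)
    (hq : Real.sqrt (∑ i, q i ^ 2) = r) (hk : Real.sqrt (∑ i, k i ^ 2) = r) :
    ∫ G, (∑ l : Fin m,
        (((1 - 4 * A) ^ ((d : ℝ) / 4) * Real.exp (A * ∑ i, (G l i) ^ 2))
            * Real.exp (Real.sqrt (1 - 4 * A) * ∑ i, G l i * q i))
        * (((1 - 4 * A) ^ ((d : ℝ) / 4) * Real.exp (A * ∑ i, (G l i) ^ 2))
            * Real.exp (Real.sqrt (1 - 4 * A) * ∑ i, G l i * k i)))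
        / (m * Real.exp (r ^ 2)) ∂(gaussianMatrix m d)
      = Real.exp (∑ i, q i * k i) :=
  sara_estimator_unbiased_general d m hm A hA r q k hq hk
end
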